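/- Let n ≥ 2, let p_1, …, p_r be distinct primes none of which divides n, and let T'V_K := V_{Φ_n} ⊗ V_{p_1} ⊗ ⋯ ⊗ V_{p_r}. Then Cond(T'V_K) ≤ Cond(V_{Φ_n}) · ∏_{i=1}^r (2 + √p_i). -/

import Mathlib

/-!
Both the Frobenius norm and matrix inversion are multiplicative under Kronecker products, so
`Cond (A ⊗ B) = Cond A * Cond B`, and likewise for the iterated product of the `V_p`.
For a `2 × 2` matrix, `A⁻¹ = (det A)⁻¹ • adj A` and `adj A` has the entries of `A` up to sign
and position, so `Cond A = ‖A‖² / |det A|`. For `V_p` this is `(p + 1) / √p` or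
`(p + 5) / (2 √p)`, both at most `2 + √p` as soon as `√p ≥ 1`.
-/

open scoped Kronecker

/-- The Frobenius norm of a complex matrix: `√(∑_{i,j} |A_{ij}|²)`. -/
noncomputable def frobNorm {m n : Type*} [Fintype m] [Fintype n]
    (A : Matrix m n ℂ) : ℝ :=
  Real.sqrt (∑ i, ∑ j, ‖A i j‖ ^ 2)

/-- The condition number `Cond(A) = ‖A‖ · ‖A⁻¹‖` (Frobenius norm). -/
noncomputable def condNum {n : Type*} [Fintype n] [DecidableEq n]
    (A : Matrix n n ℂ) : ℝ :=
  frobNorm A * frobNorm A⁻¹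

/-- The iterated Kronecker product of the matrices `V i`, realized on the
canonical index set `∀ i, Fin (t i)`: its `(f, g)` entry is `∏ i, (V i) (f i) (g i)`. -/
noncomputable def kronProd {r : ℕ} {t : Fin r → ℕ}
    (V : ∀ i, Matrix (Fin (t i)) (Fin (t i)) ℂ) :
    Matrix (∀ i, Fin (t i)) (∀ i, Fin (t i)) ℂ :=
  Matrix.of fun f g => ∏ i, V i (f i) (g i)

/-- The matrix `V_p`: `[[1, √p],[1, −√p]]` if `p ≡ 2, 3 (mod 4)`, and
`[[1, (1+√p)/2],[1, (1−√p)/2]]` if `p ≡ 1 (mod 4)`. -/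
noncomputable def Vp (p : ℕ) : Matrix (Fin 2) (Fin 2) ℝ :=
  if p % 4 = 1 then
    !![1, (1 + Real.sqrt p) / 2; 1, (1 - Real.sqrt p) / 2]
  else
    !![1, Real.sqrt p; 1, -Real.sqrt p]

section FrobeniusNorm

variable {l m n o : Type*} [Fintype l] [Fintype m] [Fintype n] [Fintype o]

lemma frobNorm_nonneg (A : Matrix m n ℂ) : 0 ≤ frobNorm A := Real.sqrt_nonneg _

lemma frobNorm_sq (A : Matrix m n ℂ) : frobNorm A ^ 2 = ∑ i, ∑ j, ‖A i j‖ ^ 2 :=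
  Real.sq_sqrt (by positivity)

lemma frobNorm_smul (c : ℂ) (A : Matrix m n ℂ) : frobNorm (c • A) = ‖c‖ * frobNorm A := by
  simp only [frobNorm, Matrix.smul_apply, smul_eq_mul, norm_mul, mul_pow, ← Finset.mul_sum]
  rw [Real.sqrt_mul (by positivity), Real.sqrt_sq (norm_nonneg c)]

lemma frobNorm_kronecker (A : Matrix l m ℂ) (B : Matrix n o ℂ) :
    frobNorm (A ⊗ₖ B) = frobNorm A * frobNorm B := by
  rw [frobNorm, frobNorm, frobNorm, ← Real.sqrt_mul (by positivity), Finset.sum_mul_sum]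
  simp only [Matrix.kroneckerMap_apply, norm_mul, mul_pow, Fintype.sum_prod_type,
    Finset.sum_mul_sum]

end FrobeniusNorm

lemma condNum_nonneg {n : Type*} [Fintype n] [DecidableEq n] (A : Matrix n n ℂ) :
    0 ≤ condNum A :=
  mul_nonneg (frobNorm_nonneg _) (frobNorm_nonneg _)

lemma condNum_kronecker {m n : Type*} [Fintype m] [DecidableEq m] [Fintype n] [DecidableEq n]
    (A : Matrix m m ℂ) (B : Matrix n n ℂ) :
    condNum (A ⊗ₖ B) = condNum A * condNum B := by
  rw [condNum, Matrix.inv_kronecker, frobNorm_kronecker, frobNorm_kronecker, condNum, condNum]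
  ring

section KronProd

variable {r : ℕ} {t : Fin r → ℕ}

lemma frobNorm_kronProd (V : ∀ i, Matrix (Fin (t i)) (Fin (t i)) ℂ) :
    frobNorm (kronProd V) = ∏ i, frobNorm (V i) := by
  have hsum : ∑ f, ∑ g, ‖kronProd V f g‖ ^ 2 = ∏ i, ∑ a, ∑ b, ‖V i a b‖ ^ 2 := by
    simp only [kronProd, Matrix.of_apply, norm_prod, Finset.prod_pow, Fintype.prod_sum]
  rw [frobNorm, hsum, Real.sqrt_prod _ fun i _ => by positivity]
  rfl

lemma kronProd_mul (V W : ∀ i, Matrix (Fin (t i)) (Fin (t i)) ℂ) :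
    kronProd V * kronProd W = kronProd fun i => V i * W i := by
  ext f h
  simp only [kronProd, Matrix.mul_apply, Matrix.of_apply, Fintype.prod_sum,
    Finset.prod_mul_distrib]

lemma kronProd_one : kronProd (fun i => (1 : Matrix (Fin (t i)) (Fin (t i)) ℂ)) = 1 := by
  ext f g
  simp only [kronProd, Matrix.of_apply, Matrix.one_apply, Finset.prod_boole, Finset.mem_univ,
    forall_const, funext_iff]

lemma kronProd_inv (V : ∀ i, Matrix (Fin (t i)) (Fin (t i)) ℂ) (hV : ∀ i, IsUnit (V i).det) :
    (kronProd V)⁻¹ = kronProd fun i => (V i)⁻¹ := by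
  refine Matrix.inv_eq_right_inv ?_
  simp only [kronProd_mul, Matrix.mul_nonsing_inv _ (hV _), kronProd_one]

lemma condNum_kronProd (V : ∀ i, Matrix (Fin (t i)) (Fin (t i)) ℂ) (hV : ∀ i, IsUnit (V i).det) :
    condNum (kronProd V) = ∏ i, condNum (V i) := by
  rw [condNum, kronProd_inv V hV, frobNorm_kronProd, frobNorm_kronProd, ← Finset.prod_mul_distrib]
  rfl

end KronProd

lemma frobNorm_adjugate_fin_two (A : Matrix (Fin 2) (Fin 2) ℂ) :
    frobNorm A.adjugate = frobNorm A := by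
  simp only [frobNorm, Matrix.adjugate_fin_two, Fin.sum_univ_two, Matrix.of_apply,
    Matrix.cons_val', Matrix.cons_val_zero, Matrix.cons_val_one, Matrix.empty_val',
    Matrix.cons_val_fin_one, norm_neg]
  congr 1
  ring

lemma frobNorm_inv_fin_two (A : Matrix (Fin 2) (Fin 2) ℂ) :
    frobNorm A⁻¹ = frobNorm A / ‖A.det‖ := by
  rw [Matrix.inv_def, Ring.inverse_eq_inv', frobNorm_smul, frobNorm_adjugate_fin_two, norm_inv,
    inv_mul_eq_div]

lemma condNum_fin_two (A : Matrix (Fin 2) (Fin 2) ℂ) :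
    condNum A = (∑ i, ∑ j, ‖A i j‖ ^ 2) / ‖A.det‖ := by
  rw [condNum, frobNorm_inv_fin_two, ← mul_div_assoc, ← sq, frobNorm_sq]

lemma det_map_ofReal {n : Type*} [Fintype n] [DecidableEq n] (A : Matrix n n ℝ) :
    (A.map Complex.ofReal).det = A.det :=
  (Complex.ofRealHom.map_det A).symm

lemma condNum_map_ofReal_fin_two (A : Matrix (Fin 2) (Fin 2) ℝ) :
    condNum (A.map Complex.ofReal) =
      (A 0 0 ^ 2 + A 0 1 ^ 2 + A 1 0 ^ 2 + A 1 1 ^ 2) / |A.det| := by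
  rw [condNum_fin_two, det_map_ofReal, Complex.norm_real, Real.norm_eq_abs]
  simp [Fin.sum_univ_two, add_assoc]

lemma det_Vp (p : ℕ) : (Vp p).det = if p % 4 = 1 then -√p else -(2 * √p) := by
  unfold Vp
  split_ifs <;> rw [Matrix.det_fin_two_of] <;> ring

lemma condNum_Vp (p : ℕ) :
    condNum ((Vp p).map Complex.ofReal) =
      if p % 4 = 1 then (p + 5) / (2 * √p) else (p + 1) / √p := by
  have hp : √(p : ℝ) ^ 2 = p := Real.sq_sqrt p.cast_nonneg
  have hs : |√(p : ℝ)| = √p := abs_of_nonneg (Real.sqrt_nonneg _)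
  rw [condNum_map_ofReal_fin_two, det_Vp]
  unfold Vp
  split_ifs <;> simp only [Matrix.of_apply, Matrix.cons_val', Matrix.cons_val_zero,
    Matrix.cons_val_one, Matrix.cons_val_fin_one, one_pow, neg_sq, abs_neg, abs_mul, abs_two, hs]
  · linear_combination hp / (2 * √(p : ℝ))
  · linear_combination hp / √(p : ℝ)

lemma condNum_Vp_le (p : ℕ) (hp : 1 ≤ p) :
    condNum ((Vp p).map Complex.ofReal) ≤ 2 + √p := by
  have hs : 1 ≤ √(p : ℝ) := Real.one_le_sqrt.mpr (by exact_mod_cast hp)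
  have hsq : √(p : ℝ) ^ 2 = p := Real.sq_sqrt p.cast_nonneg
  rw [condNum_Vp]
  split_ifs
  · rw [div_le_iff₀ (by positivity)]
    nlinarith
  · rw [div_le_iff₀ (by positivity)]
    nlinarith

lemma isUnit_det_Vp_map_ofReal {p : ℕ} (hp : p ≠ 0) :
    IsUnit ((Vp p).map Complex.ofReal).det := by
  have hs : √(p : ℝ) ≠ 0 := by positivity
  rw [det_map_ofReal, det_Vp, isUnit_iff_ne_zero, Complex.ofReal_ne_zero]
  split_ifs <;> simpa using hs

theorem condNum_hybrid_le_general (n : ℕ)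
    (ζ : Fin n.totient → ℂ)
    (r : ℕ) (p : Fin r → ℕ) (hp : ∀ i, Nat.Prime (p i)) :
    condNum ((Matrix.of fun i j : Fin n.totient => ζ i ^ (j : ℕ)) ⊗ₖ
        kronProd fun i => (Vp (p i)).map Complex.ofReal) ≤
      condNum (Matrix.of fun i j : Fin n.totient => ζ i ^ (j : ℕ)) *
        ∏ i, (2 + Real.sqrt (p i)) := by
  rw [condNum_kronecker, condNum_kronProd _ fun i => isUnit_det_Vp_map_ofReal (hp i).ne_zero]
  refine mul_le_mul_of_nonneg_left (Finset.prod_le_prod (fun i _ => condNum_nonneg _)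
    fun i _ => condNum_Vp_le _ (hp i).one_le) (condNum_nonneg _)

theorem condNum_hybrid_le (n : ℕ) (hn : 2 ≤ n)
    (ζ : Fin n.totient → ℂ) (hζ : ∀ i, IsPrimitiveRoot (ζ i) n)
    (hinj : Function.Injective ζ)
    (r : ℕ) (p : Fin r → ℕ) (hp : ∀ i, Nat.Prime (p i))
    (hpinj : Function.Injective p) (hpn : ∀ i, ¬ p i ∣ n) :
    condNum ((Matrix.of fun i j : Fin n.totient => ζ i ^ (j : ℕ)) ⊗ₖ
        kronProd fun i => (Vp (p i)).map Complex.ofReal) ≤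
      condNum (Matrix.of fun i j : Fin n.totient => ζ i ^ (j : ℕ)) *
        ∏ i, (2 + Real.sqrt (p i)) :=
  condNum_hybrid_le_general n ζ r p hp
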